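/- Assume the standing hypotheses with $C_{\phi,w}$ densely defined and $\mathsf{h}_{\phi,w}<\infty$ a.e. $[\mu]$. Let $g_1,g_2\colon X\to[0,\infty)$ be measurable. Then the inequality $\int_X \big(\mathsf{E}_{\phi,w}((g_1f)^{1/2})\big)^2\,d\mu_w \le \int_X g_2 f\,d\mu_w$ holds for every measurable $f\colon X\to[0,\infty]$ if and only if $\mu_w(\{g_1\neq0\}\setminus\{g_2\neq0\})=0$ and $\mathsf{E}_{\phi,w}(\chi_{\{g_2\neq0\}}\, g_1/g_2)\le 1$ a.e. $[\mu_w]$. -/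

import Mathlib

open MeasureTheory ENNReal NNReal Filter Topology

variable {X : Type*} [MeasurableSpace X]

/-- The measure `μ_w` with density `|w|²` with respect to `μ`. -/
noncomputable def wcMeasure (μ : Measure X) (w : X → ℂ) : Measure X :=
  μ.withDensity fun x => (‖w x‖₊ : ℝ≥0∞) ^ 2

/-- The Radon–Nikodym derivative `h_{φ,w} = d(μ_w ∘ φ⁻¹)/dμ`. -/
noncomputable def wcDeriv (μ : Measure X) (w : X → ℂ) (φ : X → X) : X → ℝ≥0∞ :=
  ((wcMeasure μ w).map φ).rnDeriv μ

/-- The modified weight `w_α = w · (h_{φ,w}/(h_{φ,w}∘φ))^{α/2}` (interpreted a.e.). -/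
noncomputable def wcAlpha (μ : Measure X) (w : X → ℂ) (φ : X → X) (α : ℝ) : X → ℂ :=
  fun x => w x * (((wcDeriv μ w φ x / wcDeriv μ w φ (φ x)) ^ (α / 2)).toReal : ℂ)

/-- `E` is (a version of) the conditional expectation of the nonnegative function `f`
with respect to the σ-algebra `φ⁻¹(𝒜)` and the measure `ν`. -/
def IsCondExp (φ : X → X) (ν : Measure X) (f E : X → ℝ≥0∞) : Prop :=
  Measurable[MeasurableSpace.comap φ inferInstance] E ∧
    ∀ s : Set X, MeasurableSet s → ∫⁻ x in φ ⁻¹' s, E x ∂ν = ∫⁻ x in φ ⁻¹' s, f x ∂ν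

/-- `g = E ∘ φ⁻¹`: the measurable function with `g ∘ φ = E` a.e. `[ν]`,
vanishing a.e. `[μ]` on the set where `h = 0`. -/
def IsQuot (φ : X → X) (μ ν : Measure X) (h : X → ℝ≥0∞) (E g : X → ℝ≥0∞) : Prop :=
  Measurable g ∧ (∀ᵐ x ∂ν, g (φ x) = E x) ∧ (∀ᵐ x ∂μ, h x = 0 → g x = 0)

/-- `E` is (a version of) the conditional expectation of the complex function `f`
with respect to the σ-algebra `φ⁻¹(𝒜)` and the measure `ν`. -/
def IsCondExpC (φ : X → X) (ν : Measure X) (f E : X → ℂ) : Prop :=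
  Measurable[MeasurableSpace.comap φ inferInstance] E ∧
    ∀ s : Set X, MeasurableSet s → ν (φ ⁻¹' s) < ⊤ →
      ∫ x in φ ⁻¹' s, E x ∂ν = ∫ x in φ ⁻¹' s, f x ∂ν

/-- `f_w = χ_{{w ≠ 0}} f / w`. -/
noncomputable def fw (w f : X → ℂ) : X → ℂ := fun x => if w x = 0 then 0 else f x / w x

/-! Write `E` for the conditional expectation with respect to `φ⁻¹(𝒜)` and `μ_w`, and
`u = χ_{g₂ ≠ 0} g₁ / g₂`. Finiteness of `h_{φ,w}` makes `μ_w` σ-finite on `φ⁻¹(𝒜)`, so `E`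
exists and every version of it agrees a.e. with Mathlib's `condLExp`.

If `μ_w({g₁ ≠ 0} \ {g₂ ≠ 0}) = 0`, then `g₁ f = u · g₂ f` a.e., and the conditional AM–GM
inequality `E((u v)^{1/2}) ≤ (e E u + e⁻¹ E v) / 2`, for all rational `e > 0`, gives
`E((g₁ f)^{1/2})² ≤ E(g₂ f)` wherever `E u ≤ 1`; integrating gives the inequality.

Conversely, testing the inequality with `f = χ_A / g₁` forces `μ_w(A) = 0` for
`A = {g₁ ≠ 0} \ {g₂ ≠ 0}`. Testing it with `f = χ_B min(u, M)² / g₁`, for `B ∈ φ⁻¹(𝒜)` of finite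
measure, bounds `∫ F²` by `∫ F` for `F = E(χ_B min(u, M))`; since `2F ≤ F² + 1` this gives
`∫_B min(u, M) ≤ μ_w(B)`, hence `∫_B E u = ∫_B u ≤ μ_w(B)`, which rules out `E u > 1` on a set
of positive measure. -/

namespace ENNReal

theorem sq_rpow_half (a : ℝ≥0∞) : (a ^ 2) ^ (1 / 2 : ℝ) = a := by
  simpa using pow_rpow_inv_natCast two_ne_zero a

theorem rpow_half_sq (a : ℝ≥0∞) : (a ^ (1 / 2 : ℝ)) ^ 2 = a := by
  simpa using rpow_inv_natCast_pow two_ne_zero a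

theorem two_mul_le_add_sq (a b : ℝ≥0∞) : 2 * a * b ≤ a ^ 2 + b ^ 2 := by
  rcases eq_or_ne a ∞ with rfl | ha
  · rcases eq_or_ne b 0 with rfl | hb <;> simp [*]
  rcases eq_or_ne b ∞ with rfl | hb
  · rcases eq_or_ne a 0 with rfl | ha0 <;> simp [*]
  lift a to ℝ≥0 using ha
  lift b to ℝ≥0 using hb
  exact_mod_cast _root_.two_mul_le_add_sq a b

theorem rpow_half_mul_le {e : ℝ≥0∞} (he0 : e ≠ 0) (het : e ≠ ∞) (x y : ℝ≥0∞) :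
    (x * y) ^ (1 / 2 : ℝ) ≤ 2⁻¹ * (e * x + e⁻¹ * y) := by
  have hxy : x * y = e * x * (e⁻¹ * y) := by
    rw [mul_mul_mul_comm, ENNReal.mul_inv_cancel he0 het, one_mul]
  rw [hxy, mul_rpow_of_nonneg _ _ (by norm_num)]
  set a := (e * x) ^ (1 / 2 : ℝ)
  set b := (e⁻¹ * y) ^ (1 / 2 : ℝ)
  calc a * b = 2⁻¹ * (2 * a * b) := by
        rw [mul_assoc, ← mul_assoc, ENNReal.inv_mul_cancel two_ne_zero ofNat_ne_top, one_mul]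
    _ ≤ 2⁻¹ * (a ^ 2 + b ^ 2) := by gcongr; exact two_mul_le_add_sq a b
    _ = 2⁻¹ * (e * x + e⁻¹ * y) := by rw [rpow_half_sq, rpow_half_sq]

theorem sq_le_of_forall_le_inv_two_mul_add {a c : ℝ≥0∞}
    (h : ∀ q : ℚ, 0 < q → a ≤ 2⁻¹ * (ENNReal.ofReal q + (ENNReal.ofReal q)⁻¹ * c)) :
    a ^ 2 ≤ c := by
  by_contra! hca
  have hlt : c ^ (1 / 2 : ℝ) < a := by
    simpa only [sq_rpow_half] using rpow_lt_rpow hca (by norm_num : (0 : ℝ) < 1 / 2)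
  obtain ⟨q, -, hcq, hqa⟩ := ENNReal.lt_iff_exists_rat_btwn.1 hlt
  set e : ℝ≥0∞ := ENNReal.ofReal q
  replace hcq : c ^ (1 / 2 : ℝ) < e := hcq
  replace hqa : e < a := hqa
  have he0 : e ≠ 0 := (hcq.trans_le' zero_le).ne'
  have hq : 0 < q := by simpa [e] using he0
  have hce : e⁻¹ * c < e := by
    rw [← ENNReal.div_eq_inv_mul]
    refine div_lt_of_lt_mul' ?_
    rw [← rpow_half_sq c, sq]
    exact ENNReal.mul_lt_mul hcq hcq
  refine (h q hq).not_gt (lt_of_lt_of_le ?_ hqa.le)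
  calc 2⁻¹ * (e + e⁻¹ * c) < 2⁻¹ * (e + e) :=
        ENNReal.mul_lt_mul_right (by simp) (by simp) (ENNReal.add_lt_add_left ofReal_ne_top hce)
    _ = e := by rw [← two_mul, ← mul_assoc, ENNReal.inv_mul_cancel two_ne_zero ofNat_ne_top, one_mul]

end ENNReal

section CondLExp

variable {α : Type*} {m m0 : MeasurableSpace α} {ν : Measure α}

theorem lintegral_le_measure_univ_of_lintegral_sq_le {F : α → ℝ≥0∞} (hF : AEMeasurable F ν)
    (hsq : ∫⁻ x, F x ^ 2 ∂ν ≤ ∫⁻ x, F x ∂ν) (hfin : ∫⁻ x, F x ∂ν ≠ ∞) :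
    ∫⁻ x, F x ∂ν ≤ ν Set.univ := by
  have h : 2 * ∫⁻ x, F x ∂ν ≤ ∫⁻ x, F x ∂ν + ν Set.univ :=
    calc 2 * ∫⁻ x, F x ∂ν = ∫⁻ x, 2 * F x * 1 ∂ν := by simp [lintegral_const_mul' _ _ ofNat_ne_top]
      _ ≤ ∫⁻ x, (F x ^ 2 + 1 ^ 2) ∂ν := lintegral_mono fun x => ENNReal.two_mul_le_add_sq _ _
      _ ≤ ∫⁻ x, F x ∂ν + ν Set.univ := by
        rw [lintegral_add_left' (hF.pow_const 2)]
        simp only [one_pow, lintegral_const, one_mul]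
        gcongr
  rwa [two_mul, ENNReal.add_le_add_iff_left hfin] at h

theorem condLExp_rpow_half_mul_le {u v : α → ℝ≥0∞} (hu : AEMeasurable u ν) {e : ℝ≥0∞}
    (he0 : e ≠ 0) (het : e ≠ ∞) :
    ν⁻[fun x => (u x * v x) ^ (1 / 2 : ℝ)|m] ≤ᵐ[ν]
      (2 : ℝ≥0∞)⁻¹ • (e • ν⁻[u|m] + e⁻¹ • ν⁻[v|m]) := by
  have hmono : ν⁻[fun x => (u x * v x) ^ (1 / 2 : ℝ)|m] ≤ᵐ[ν]
      ν⁻[(2 : ℝ≥0∞)⁻¹ • (e • u + e⁻¹ • v)|m] :=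
    condLExp_mono (ae_of_all _ fun x => rpow_half_mul_le he0 het (u x) (v x))
  filter_upwards [hmono,
    condLExp_smul' (mΩ := m) (e • u + e⁻¹ • v) (c := (2 : ℝ≥0∞)⁻¹) (by simp),
    condLExp_add_left (mΩ := m) (e⁻¹ • v) (hu.const_smul e),
    condLExp_smul' (mΩ := m) u het, condLExp_smul' (mΩ := m) v (ENNReal.inv_ne_top.2 he0)]
    with x h1 h2 h3 h4 h5
  simp only [Pi.smul_apply, Pi.add_apply, smul_eq_mul] at h1 h2 h3 h4 h5 ⊢
  rwa [h2, h3, h4, h5] at h1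

theorem condLExp_rpow_half_mul_sq_le {u v : α → ℝ≥0∞} (hu : AEMeasurable u ν)
    (hu1 : ν⁻[u|m] ≤ᵐ[ν] 1) :
    (fun x => ν⁻[fun x => (u x * v x) ^ (1 / 2 : ℝ)|m] x ^ 2) ≤ᵐ[ν] ν⁻[v|m] := by
  have hq : ∀ q : ℚ, ∀ᵐ x ∂ν, 0 < q → ν⁻[fun x => (u x * v x) ^ (1 / 2 : ℝ)|m] x ≤
      2⁻¹ * (ENNReal.ofReal q + (ENNReal.ofReal q)⁻¹ * ν⁻[v|m] x) := by
    intro q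
    rcases lt_or_ge 0 q with hq | hq
    · have he0 : ENNReal.ofReal q ≠ 0 := by simpa using hq
      filter_upwards [condLExp_rpow_half_mul_le (v := v) hu he0 ofReal_ne_top, hu1]
        with x hx hx1 _
      refine hx.trans ?_
      simp only [Pi.smul_apply, Pi.add_apply, smul_eq_mul]
      gcongr
      simpa using mul_le_mul_right hx1 (ENNReal.ofReal q)
    · exact ae_of_all _ fun x h => absurd h hq.not_gt
  filter_upwards [ae_all_iff.2 hq] with x hx
  exact ENNReal.sq_le_of_forall_le_inv_two_mul_add fun q h => hx q h

end CondLExp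

section DivOnSupport

variable {α : Type*} {g₁ g₂ : α → ℝ≥0}

noncomputable def divOnSupport (g₁ g₂ : α → ℝ≥0) : α → ℝ≥0∞ :=
  fun x => if g₂ x = 0 then 0 else ((g₁ x : ℝ≥0∞) / (g₂ x : ℝ≥0∞))

theorem measurable_divOnSupport [MeasurableSpace α] (hg₁ : Measurable g₁) (hg₂ : Measurable g₂) :
    Measurable (divOnSupport g₁ g₂) :=
  Measurable.ite (hg₂ (measurableSet_singleton 0)) measurable_const
    (hg₁.coe_nnreal_ennreal.div hg₂.coe_nnreal_ennreal)

theorem divOnSupport_eq_zero {x : α} (h : g₁ x = 0) : divOnSupport g₁ g₂ x = 0 := by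
  simp [divOnSupport, h]

theorem divOnSupport_mul {x : α} (h : g₂ x ≠ 0 ∨ g₁ x = 0) :
    divOnSupport g₁ g₂ x * g₂ x = g₁ x := by
  rcases h with h | h
  · simp [divOnSupport, h, ENNReal.div_mul_cancel]
  · simp [divOnSupport, h]

theorem mul_sq_div_le_of_le_divOnSupport {x : α} {t : ℝ≥0∞} (ht : t ≤ divOnSupport g₁ g₂ x) :
    g₂ x * (t ^ 2 / g₁ x) ≤ t := by
  by_cases h₂ : g₂ x = 0
  · simp [h₂]
  by_cases h₁ : g₁ x = 0
  · simp [divOnSupport, h₁, h₂] at ht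
    simp [ht]
  have htg : t * g₂ x ≤ g₁ x := by
    simpa [divOnSupport, h₂, ENNReal.le_div_iff_mul_le] using ht
  calc (g₂ x : ℝ≥0∞) * (t ^ 2 / g₁ x) = t * (t * g₂ x * (g₁ x : ℝ≥0∞)⁻¹) := by
        rw [ENNReal.div_eq_inv_mul]; ring
    _ ≤ t * (g₁ x * (g₁ x : ℝ≥0∞)⁻¹) := by gcongr
    _ = t := by rw [ENNReal.mul_inv_cancel (by simpa using h₁) coe_ne_top, mul_one]

end DivOnSupport

def CondLExpSqrtIneq {α : Type*} (m : MeasurableSpace α) [MeasurableSpace α] (ν : Measure α)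
    (g₁ g₂ : α → ℝ≥0) : Prop :=
  ∀ f : α → ℝ≥0∞, Measurable f →
    ∫⁻ x, ν⁻[fun x => ((g₁ x : ℝ≥0∞) * f x) ^ (1 / 2 : ℝ)|m] x ^ 2 ∂ν ≤
      ∫⁻ x, (g₂ x : ℝ≥0∞) * f x ∂ν

section CondLExpSqrtIneq

variable {α : Type*} {m m0 : MeasurableSpace α} {ν : Measure α} {g₁ g₂ : α → ℝ≥0}

theorem CondLExpSqrtIneq.lintegral_condLExp_sq_le (H : CondLExpSqrtIneq m ν g₁ g₂)
    (hg₁ : Measurable g₁) {h : α → ℝ≥0∞} (hh : Measurable h) (h₀ : ∀ x, g₁ x = 0 → h x = 0) :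
    ∫⁻ x, ν⁻[h|m] x ^ 2 ∂ν ≤ ∫⁻ x, (g₂ x : ℝ≥0∞) * (h x ^ 2 / g₁ x) ∂ν := by
  have hroot : (fun x => ((g₁ x : ℝ≥0∞) * (h x ^ 2 / g₁ x)) ^ (1 / 2 : ℝ)) = h := by
    funext x
    by_cases hx : g₁ x = 0
    · simp [hx, h₀ x hx]
    · rw [ENNReal.mul_div_cancel (by simpa using hx) coe_ne_top, ENNReal.sq_rpow_half]
  have := H (fun x => h x ^ 2 / g₁ x) ((hh.pow_const 2).div hg₁.coe_nnreal_ennreal)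
  rwa [hroot] at this

theorem CondLExpSqrtIneq.measure_eq_zero (H : CondLExpSqrtIneq m ν g₁ g₂) (hm : m ≤ m0)
    [SigmaFinite (ν.trim hm)] (hg₁ : Measurable g₁) (hg₂ : Measurable g₂) :
    ν {x | g₁ x ≠ 0 ∧ g₂ x = 0} = 0 := by
  set A := {x | g₁ x ≠ 0 ∧ g₂ x = 0}
  have hA : MeasurableSet A :=
    (hg₁ (measurableSet_singleton 0)).compl.inter (hg₂ (measurableSet_singleton 0))
  have hsq := H.lintegral_condLExp_sq_le hg₁ (measurable_one.indicator hA)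
    fun x hx => Set.indicator_of_notMem (fun hxA => hxA.1 hx) _
  have hzero : ∀ x, (g₂ x : ℝ≥0∞) * (A.indicator 1 x ^ 2 / g₁ x) = 0 := fun x => by
    by_cases hx : x ∈ A
    · simp [hx.2]
    · simp [hx]
  simp only [hzero, lintegral_zero, nonpos_iff_eq_zero] at hsq
  have hE : ν⁻[A.indicator 1|m] =ᵐ[ν] 0 := by
    filter_upwards [(lintegral_eq_zero_iff (by fun_prop)).1 hsq] with x hx
    simpa using hx
  rw [← lintegral_indicator_one hA, ← lintegral_condLExp hm, lintegral_congr_ae hE]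
  simp

theorem CondLExpSqrtIneq.setLIntegral_divOnSupport_le (H : CondLExpSqrtIneq m ν g₁ g₂)
    (hm : m ≤ m0) [SigmaFinite (ν.trim hm)] (hg₁ : Measurable g₁) (hg₂ : Measurable g₂)
    {B : Set α} (hB : MeasurableSet[m] B) (hνB : ν B ≠ ∞) :
    ∫⁻ x in B, divOnSupport g₁ g₂ x ∂ν ≤ ν B := by
  set u := divOnSupport g₁ g₂
  have hu : Measurable u := measurable_divOnSupport hg₁ hg₂
  have hsup : ∫⁻ x in B, u x ∂ν = ⨆ M : ℕ, ∫⁻ x in B, min (u x) M ∂ν := by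
    rw [← lintegral_iSup (fun M => hu.min measurable_const)
      fun i j hij x => min_le_min_left _ (by exact_mod_cast hij)]
    congr with x
    rw [← inf_iSup_eq, iSup_natCast, inf_top_eq]
  rw [hsup]
  refine iSup_le fun M => ?_
  -- `h = (g₁ f)^{1/2}` for the test function `f = χ_B min(u, M)² / g₁`
  set h := B.indicator fun x => min (u x) M
  have hh : Measurable h := (hu.min measurable_const).indicator (hm _ hB)
  have hint : ∫⁻ x in B, ν⁻[h|m] x ∂ν = ∫⁻ x in B, min (u x) M ∂ν := by
    rw [setLIntegral_condLExp hm _ _ hB, setLIntegral_indicator (hm _ hB), Set.inter_self]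
  have hfin : ∫⁻ x in B, min (u x) M ∂ν ≠ ∞ :=
    ((setLIntegral_mono measurable_const fun x _ => min_le_right _ _).trans_lt
      (by simpa using ENNReal.mul_lt_top (natCast_lt_top M) hνB.lt_top)).ne
  have hsq : ∫⁻ x in B, ν⁻[h|m] x ^ 2 ∂ν ≤ ∫⁻ x in B, ν⁻[h|m] x ∂ν :=
    calc ∫⁻ x in B, ν⁻[h|m] x ^ 2 ∂ν ≤ ∫⁻ x, ν⁻[h|m] x ^ 2 ∂ν := setLIntegral_le_lintegral _ _
      _ ≤ ∫⁻ x, (g₂ x : ℝ≥0∞) * (h x ^ 2 / g₁ x) ∂ν :=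
        H.lintegral_condLExp_sq_le hg₁ hh fun x hx =>
          Set.indicator_apply_eq_zero.2 fun _ => by simp [u, divOnSupport_eq_zero hx]
      _ ≤ ∫⁻ x, h x ∂ν := lintegral_mono fun x =>
        mul_sq_div_le_of_le_divOnSupport (Set.indicator_le (fun _ _ => min_le_left _ _) x)
      _ = ∫⁻ x in B, ν⁻[h|m] x ∂ν := by rw [hint, lintegral_indicator (hm _ hB)]
  rw [← hint]
  simpa using lintegral_le_measure_univ_of_lintegral_sq_le
    (measurable_condLExp' m ν h).aemeasurable hsq (hint ▸ hfin)

theorem CondLExpSqrtIneq.condLExp_divOnSupport_le_one (H : CondLExpSqrtIneq m ν g₁ g₂)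
    (hm : m ≤ m0) [SigmaFinite (ν.trim hm)] (hg₁ : Measurable g₁) (hg₂ : Measurable g₂) :
    ν⁻[divOnSupport g₁ g₂|m] ≤ᵐ[ν] 1 := by
  set U := ν⁻[divOnSupport g₁ g₂|m]
  have hpiece : ∀ k, ν ({x | 1 < U x} ∩ spanningSets (ν.trim hm) k) = 0 := by
    intro k
    set B := {x | 1 < U x} ∩ spanningSets (ν.trim hm) k
    have hB : MeasurableSet[m] B :=
      (measurableSet_lt measurable_const (measurable_condLExp m ν _)).inter
        (measurableSet_spanningSets _ k)
    have hνB : ν B ≠ ∞ := by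
      refine ne_top_of_le_ne_top ?_ (measure_mono Set.inter_subset_right)
      rw [← trim_measurableSet_eq hm (measurableSet_spanningSets _ k)]
      exact (measure_spanningSets_lt_top _ k).ne
    by_contra hB0
    refine (H.setLIntegral_divOnSupport_le hm hg₁ hg₂ hB hνB).not_gt ?_
    calc ν B = ∫⁻ _ in B, 1 ∂ν := (setLIntegral_one B).symm
      _ < ∫⁻ x in B, U x ∂ν := setLIntegral_strict_mono (hm _ hB) hB0
          (measurable_condLExp' m ν _) (by simpa using hνB) (ae_of_all _ fun x hx => hx.1)
      _ = ∫⁻ x in B, divOnSupport g₁ g₂ x ∂ν := setLIntegral_condLExp hm _ _ hB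
  refine measure_mono_null (fun x hx => ?_) (measure_iUnion_null hpiece)
  exact Set.mem_iUnion.2 ⟨_, not_le.1 (by simpa using hx), mem_spanningSetsIndex _ x⟩

theorem condLExpSqrtIneq_of_condLExp_divOnSupport_le_one (hm : m ≤ m0)
    [SigmaFinite (ν.trim hm)] (hg₁ : Measurable g₁) (hg₂ : Measurable g₂)
    (hA : ν {x | g₁ x ≠ 0 ∧ g₂ x = 0} = 0) (hU : ν⁻[divOnSupport g₁ g₂|m] ≤ᵐ[ν] 1) :
    CondLExpSqrtIneq m ν g₁ g₂ := by
  intro f _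
  have hsplit : (fun x => ((g₁ x : ℝ≥0∞) * f x) ^ (1 / 2 : ℝ)) =ᵐ[ν]
      fun x => (divOnSupport g₁ g₂ x * (g₂ x * f x)) ^ (1 / 2 : ℝ) := by
    filter_upwards [measure_eq_zero_iff_ae_notMem.1 hA] with x hx
    rw [← mul_assoc, divOnSupport_mul (by tauto)]
  calc ∫⁻ x, ν⁻[fun x => ((g₁ x : ℝ≥0∞) * f x) ^ (1 / 2 : ℝ)|m] x ^ 2 ∂ν
      = ∫⁻ x, ν⁻[fun x => (divOnSupport g₁ g₂ x * (g₂ x * f x)) ^ (1 / 2 : ℝ)|m] x ^ 2 ∂ν :=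
        lintegral_congr_ae ((condLExp_congr_ae hsplit).fun_comp (· ^ 2))
    _ ≤ ∫⁻ x, ν⁻[fun x => (g₂ x : ℝ≥0∞) * f x|m] x ∂ν :=
        lintegral_mono_ae
          (condLExp_rpow_half_mul_sq_le (measurable_divOnSupport hg₁ hg₂).aemeasurable hU)
    _ = ∫⁻ x, (g₂ x : ℝ≥0∞) * f x ∂ν := lintegral_condLExp hm ν _

theorem condLExpSqrtIneq_iff (hm : m ≤ m0) [SigmaFinite (ν.trim hm)]
    (hg₁ : Measurable g₁) (hg₂ : Measurable g₂) :
    CondLExpSqrtIneq m ν g₁ g₂ ↔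
      ν {x | g₁ x ≠ 0 ∧ g₂ x = 0} = 0 ∧ ν⁻[divOnSupport g₁ g₂|m] ≤ᵐ[ν] 1 :=
  ⟨fun H => ⟨H.measure_eq_zero hm hg₁ hg₂, H.condLExp_divOnSupport_le_one hm hg₁ hg₂⟩,
    fun ⟨hA, hU⟩ => condLExpSqrtIneq_of_condLExp_divOnSupport_le_one hm hg₁ hg₂ hA hU⟩

end CondLExpSqrtIneq

theorem sigmaFinite_of_rnDeriv_lt_top {α : Type*} [MeasurableSpace α] {μ ν : Measure α}
    [SigmaFinite μ] [SFinite ν] (hνμ : ν ≪ μ) (hfin : ∀ᵐ x ∂μ, ν.rnDeriv μ x < ∞) :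
    SigmaFinite ν := by
  rw [← Measure.withDensity_rnDeriv_eq ν μ hνμ]
  exact SigmaFinite.withDensity_of_ne_top (hfin.mono fun _ => ne_of_lt)

theorem sigmaFinite_trim_comap {α β : Type*} [MeasurableSpace α] [MeasurableSpace β]
    {ν : Measure α} {φ : α → β} (hφ : Measurable φ) [SigmaFinite (ν.map φ)] :
    SigmaFinite (ν.trim hφ.comap_le) :=
  SigmaFinite.of_map _ (Measurable.of_comap_le le_rfl).aemeasurable
    (by rw [map_trim_comap hφ]; infer_instance)

section IsCondExp

variable {φ : X → X} {ν : Measure X} {f : X → ℝ≥0∞}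

theorem isCondExp_condLExp (hφ : Measurable φ) [SigmaFinite (ν.trim hφ.comap_le)] :
    IsCondExp φ ν f ν⁻[f|MeasurableSpace.comap φ inferInstance] :=
  ⟨measurable_condLExp _ _ _, fun s hs => setLIntegral_condLExp hφ.comap_le ν f ⟨s, hs, rfl⟩⟩

theorem IsCondExp.ae_eq_condLExp (hφ : Measurable φ) [SigmaFinite (ν.trim hφ.comap_le)]
    {E : X → ℝ≥0∞} (hE : IsCondExp φ ν f E) :
    E =ᵐ[ν] ν⁻[f|MeasurableSpace.comap φ inferInstance] :=
  MeasureTheory.ae_eq_condLExp hφ.comap_le ν f hE.1 fun _ ⟨s, hs, hpre⟩ => hpre ▸ hE.2 s hs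

theorem forall_isCondExp_iff (hφ : Measurable φ) [SigmaFinite (ν.trim hφ.comap_le)]
    {P : (X → ℝ≥0∞) → Prop}
    (hP : ∀ E, E =ᵐ[ν] ν⁻[f|MeasurableSpace.comap φ inferInstance] →
      P ν⁻[f|MeasurableSpace.comap φ inferInstance] → P E) :
    (∀ E, IsCondExp φ ν f E → P E) ↔ P ν⁻[f|MeasurableSpace.comap φ inferInstance] :=
  ⟨fun h => h _ (isCondExp_condLExp hφ), fun h E hE => hP E (hE.ae_eq_condLExp hφ) h⟩

end IsCondExp

theorem aluthge_wco_herron_general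
    (μ : Measure X) [SigmaFinite μ] (w : X → ℂ) (φ : X → X)
    (hφ : Measurable φ)
    (habs : (wcMeasure μ w).map φ ≪ μ)
    (hfin : ∀ᵐ x ∂μ, wcDeriv μ w φ x < ⊤)
    (g₁ g₂ : X → ℝ≥0) (hg₁ : Measurable g₁) (hg₂ : Measurable g₂) :
    (∀ f : X → ℝ≥0∞, Measurable f → ∀ E : X → ℝ≥0∞,
      IsCondExp φ (wcMeasure μ w) (fun x => ((g₁ x : ℝ≥0∞) * f x) ^ (1 / 2 : ℝ)) E →
        ∫⁻ x, E x ^ 2 ∂(wcMeasure μ w) ≤ ∫⁻ x, (g₂ x : ℝ≥0∞) * f x ∂(wcMeasure μ w)) ↔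
    (wcMeasure μ w {x | g₁ x ≠ 0 ∧ g₂ x = 0} = 0 ∧
      ∀ E' : X → ℝ≥0∞,
        IsCondExp φ (wcMeasure μ w)
          (fun x => if g₂ x = 0 then 0 else ((g₁ x : ℝ≥0∞) / (g₂ x : ℝ≥0∞))) E' →
        ∀ᵐ x ∂(wcMeasure μ w), E' x ≤ 1) := by
  have : SFinite (wcMeasure μ w) := by unfold wcMeasure; infer_instance
  have := sigmaFinite_of_rnDeriv_lt_top habs hfin
  have := sigmaFinite_trim_comap (ν := wcMeasure μ w) hφ
  calc _ ↔ CondLExpSqrtIneq (MeasurableSpace.comap φ inferInstance) (wcMeasure μ w) g₁ g₂ :=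
        forall₂_congr fun f _ => forall_isCondExp_iff hφ fun E hE h =>
          (lintegral_congr_ae (hE.fun_comp (· ^ 2))).trans_le h
    _ ↔ _ := condLExpSqrtIneq_iff hφ.comap_le hg₁ hg₂
    _ ↔ _ := and_congr_right' <| .symm <| forall_isCondExp_iff (f := divOnSupport g₁ g₂)
        (P := fun E => ∀ᵐ x ∂(wcMeasure μ w), E x ≤ 1) hφ fun E hE h => by
          filter_upwards [hE, h] with x hx hx'
          rwa [hx]

/-- For nonnegative measurable `g₁, g₂`, the inequality
`∫ E_{φ,w}((g₁ f)^{1/2})² dμ_w ≤ ∫ g₂ f dμ_w` holds for all measurable `f ≥ 0`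
iff `μ_w({g₁ ≠ 0} \ {g₂ ≠ 0}) = 0` and `E_{φ,w}(χ_{{g₂≠0}} g₁/g₂) ≤ 1` a.e. `[μ_w]`. -/
theorem aluthge_wco_herron
    (μ : Measure X) [SigmaFinite μ] (w : X → ℂ) (φ : X → X)
    (hw : Measurable w) (hφ : Measurable φ)
    (habs : (wcMeasure μ w).map φ ≪ μ)
    (hfin : ∀ᵐ x ∂μ, wcDeriv μ w φ x < ⊤)
    (g₁ g₂ : X → ℝ≥0) (hg₁ : Measurable g₁) (hg₂ : Measurable g₂) :
    (∀ f : X → ℝ≥0∞, Measurable f → ∀ E : X → ℝ≥0∞,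
      IsCondExp φ (wcMeasure μ w) (fun x => ((g₁ x : ℝ≥0∞) * f x) ^ (1 / 2 : ℝ)) E →
        ∫⁻ x, E x ^ 2 ∂(wcMeasure μ w) ≤ ∫⁻ x, (g₂ x : ℝ≥0∞) * f x ∂(wcMeasure μ w)) ↔
    (wcMeasure μ w {x | g₁ x ≠ 0 ∧ g₂ x = 0} = 0 ∧
      ∀ E' : X → ℝ≥0∞,
        IsCondExp φ (wcMeasure μ w)
          (fun x => if g₂ x = 0 then 0 else ((g₁ x : ℝ≥0∞) / (g₂ x : ℝ≥0∞))) E' →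
        ∀ᵐ x ∂(wcMeasure μ w), E' x ≤ 1) :=
  aluthge_wco_herron_general μ w φ hφ habs hfin g₁ g₂ hg₁ hg₂
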